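/- arXiv:1710.00097 — 2 statements merged into one kernel-verified Lean document; each statement's English description precedes it below -/
import Mathlib

section
/- Let φ : R → Q be an injective ring epimorphism. Then every right Q-module M is torsion-free as a right R-module, where torsion is taken with respect to the torsion theory whose torsion class consists of the right R-modules T with T ⊗_R Q = 0. That is, Hom_R(T, M) = 0 for every right R-module T satisfying T ⊗_R Q = 0. -/
open MulOpposite

universe u

/-- `φ : R →+* Q` is an epimorphism in the category of rings. -/
def IsRingEpi {R Q : Type u} [Ring R] [Ring Q] (φ : R →+* Q) : Prop :=
  ∀ (T : Type u) [Ring T] (ψ ω : Q →+* T), ψ.comp φ = ω.comp φ → ψ = ω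

section NCTensor

variable (R : Type u) [Ring R] (M : Type u) [AddCommGroup M] [Module Rᵐᵒᵖ M]
  (N : Type u) [AddCommGroup N] [Module R N]

/-- Relations defining the tensor product `M ⊗_R N` of a right `R`-module `M`
and a left `R`-module `N` over a (possibly noncommutative) ring `R`. -/
def ncRels : AddSubgroup (FreeAbelianGroup (M × N)) :=
  AddSubgroup.closure
    ({x | ∃ m m' n, x = FreeAbelianGroup.of (m + m', n) - FreeAbelianGroup.of (m, n) -
        FreeAbelianGroup.of (m', n)} ∪
     {x | ∃ m n n', x = FreeAbelianGroup.of (m, n + n') - FreeAbelianGroup.of (m, n) -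
        FreeAbelianGroup.of (m, n')} ∪
     {x | ∃ (r : R) (m : M) (n : N), x = FreeAbelianGroup.of (op r • m, n) -
        FreeAbelianGroup.of (m, r • n)})

/-- The tensor product `M ⊗_R N` of a right `R`-module and a left `R`-module over a
(possibly noncommutative) ring `R`, as an abelian group. -/
def NCTensor : Type u := FreeAbelianGroup (M × N) ⧸ ncRels R M N

instance : AddCommGroup (NCTensor R M N) :=
  QuotientAddGroup.Quotient.addCommGroup _

/-- The pure tensor `m ⊗ n` in `M ⊗_R N`. -/
def NCTensor.tmul (m : M) (n : N) : NCTensor R M N :=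
  QuotientAddGroup.mk (FreeAbelianGroup.of (m, n))

end NCTensor

/-!
The map `T × Q → M`, `(t, q) ↦ f t • q` is balanced over `R` because the `R`-action on `M` is
restricted from the `Q`-action, so it factors through `T ⊗_R Q`. Since `f t` is the image of
`t ⊗ 1`, `f` vanishes as soon as `T ⊗_R Q = 0`.
-/

namespace NCTensor

variable {R : Type u} [Ring R] {M : Type u} [AddCommGroup M] [Module Rᵐᵒᵖ M]
  {N : Type u} [AddCommGroup N] [Module R N] {A : Type*} [AddCommGroup A]

def lift (b : M →+ N →+ A) (hb : ∀ (r : R) (m : M) (n : N), b (op r • m) n = b m (r • n)) :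
    NCTensor R M N →+ A :=
  QuotientAddGroup.lift (ncRels R M N) (FreeAbelianGroup.lift fun p => b p.1 p.2) <| by
    rw [ncRels, AddSubgroup.closure_le]
    rintro x ((⟨m, m', n, rfl⟩ | ⟨m, n, n', rfl⟩) | ⟨r, m, n, rfl⟩) <;>
      simp [hb]

theorem lift_tmul (b : M →+ N →+ A)
    (hb : ∀ (r : R) (m : M) (n : N), b (op r • m) n = b m (r • n)) (m : M) (n : N) :
    lift b hb (tmul R M N m n) = b m n :=
  FreeAbelianGroup.lift_apply_of _ _

end NCTensor

theorem qmodule_torsionFree_general {R Q : Type u} [Ring R] [Ring Q] (φ : R →+* Q)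
    [Module R Q] (hl : ∀ (r : R) (q : Q), r • q = φ r * q)
    (M : Type u) [AddCommGroup M] [Module Qᵐᵒᵖ M] [Module Rᵐᵒᵖ M]
    (hM : ∀ (r : R) (m : M), (op r : Rᵐᵒᵖ) • m = (op (φ r) : Qᵐᵒᵖ) • m) :
    ∀ (T : Type u) [AddCommGroup T] [Module Rᵐᵒᵖ T],
      Subsingleton (NCTensor R T Q) → ∀ f : T →ₗ[Rᵐᵒᵖ] M, f = 0 := by
  intro T _ _ hT f
  let act : T →+ Q →+ M :=
    ((smulAddHom Qᵐᵒᵖ M).comp opAddEquiv.toAddMonoidHom).flip.comp f.toAddMonoidHom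
  have act_apply (t : T) (q : Q) : act t q = op q • f t := rfl
  have act_balanced (r : R) (t : T) (q : Q) : act (op r • t) q = act t (r • q) := by
    rw [act_apply, act_apply, map_smul, hM, smul_smul, hl, op_mul]
  ext t
  calc f t = act t 1 := by rw [act_apply, op_one, one_smul]
    _ = NCTensor.lift act act_balanced (NCTensor.tmul R T Q t 1) :=
        (NCTensor.lift_tmul act act_balanced t 1).symm
    _ = 0 := by rw [Subsingleton.elim (NCTensor.tmul R T Q t 1) 0, map_zero]

/-- If `φ : R → Q` is an injective ring epimorphism, then every right `Q`-module `M` is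
torsion-free as a right `R`-module: `Hom_R(T, M) = 0` for every right `R`-module `T`
with `T ⊗_R Q = 0`. -/
theorem qmodule_torsionFree {R Q : Type u} [Ring R] [Ring Q] (φ : R →+* Q)
    (hinj : Function.Injective φ) (hepi : IsRingEpi φ)
    [Module R Q] (hl : ∀ (r : R) (q : Q), r • q = φ r * q)
    (M : Type u) [AddCommGroup M] [Module Qᵐᵒᵖ M] [Module Rᵐᵒᵖ M]
    (hM : ∀ (r : R) (m : M), (op r : Rᵐᵒᵖ) • m = (op (φ r) : Qᵐᵒᵖ) • m) :
    ∀ (T : Type u) [AddCommGroup T] [Module Rᵐᵒᵖ T],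
      Subsingleton (NCTensor R T Q) → ∀ f : T →ₗ[Rᵐᵒᵖ] M, f = 0 :=
  qmodule_torsionFree_general φ hl M hM
end

section
/- Let φ : R → Q be an injective ring epimorphism with Q flat as a left R-module. Then every left R-module M that is weak-injective (i.e., Ext^1_R(I, M) = 0 for all left R-modules I of weak/flat dimension ≤ 1) is h-divisible and Matlis-cotorsion: M equals the image of the evaluation map Hom_R(Q, M) → M, and Ext^1_R(Q, M) = 0. -/
open MulOpposite

universe u

/-- A left `R`-module `N` is flat if tensoring right `R`-modules with `N`
preserves injectivity. -/
def IsFlatLeftModule (R : Type u) [Ring R] (N : Type u) [AddCommGroup N] [Module R N] : Prop :=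
  ∀ (A B : Type u) [AddCommGroup A] [AddCommGroup B] [Module Rᵐᵒᵖ A] [Module Rᵐᵒᵖ B]
    (i : A →ₗ[Rᵐᵒᵖ] B), Function.Injective i →
    ∀ g : NCTensor R A N →+ NCTensor R B N,
      (∀ a n, g (NCTensor.tmul R A N a n) = NCTensor.tmul R B N (i a) n) →
      Function.Injective g

open CategoryTheory in
/-- The Ext group `Ext^n_A(M, N)` for modules over an arbitrary ring `A`,
computed in the abelian category of `A`-modules. -/
noncomputable abbrev extGroup (A : Type u) [Ring A] (n : ℕ) (M : Type u) [AddCommGroup M]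
    [Module A M] (N : Type u) [AddCommGroup N] [Module A N] : Type u :=
  ((Ext ℤ (ModuleCat.{u} A) n).obj (Opposite.op (ModuleCat.of A M))).obj (ModuleCat.of A N)

/-- A left `R`-module `I` has weak (flat) dimension at most 1: there is a short exact
sequence `0 → F₁ → F₀ → I → 0` with `F₁` and `F₀` flat. -/
def FlatDimLE1 (R : Type u) [Ring R] (I : Type u) [AddCommGroup I] [Module R I] : Prop :=
  ∃ (F1 : Type u) (a1 : AddCommGroup F1), letI := a1; ∃ (m1 : Module R F1), letI := m1;
  ∃ (F0 : Type u) (a0 : AddCommGroup F0), letI := a0; ∃ (m0 : Module R F0), letI := m0;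
  ∃ (i : F1 →ₗ[R] F0) (p : F0 →ₗ[R] I),
    IsFlatLeftModule R F1 ∧ IsFlatLeftModule R F0 ∧
    Function.Injective i ∧ Function.Surjective p ∧ LinearMap.range i = LinearMap.ker p


/-! Since `Q` is flat and `0 → R → Q → K → 0` is a flat resolution of `K`, both `Q` and `K` have
flat dimension at most one, so `Ext¹(Q, M) = Ext¹(K, M) = 0`. Given `m : M`, the vanishing of
`Ext¹(K, M)` splits the pushout of `0 → R → Q → K → 0` along `r ↦ r • m`, and the retraction
restricted to `Q` extends `r ↦ r • m`. -/

namespace NCTensor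

variable {R : Type u} [Ring R] {M : Type u} [AddCommGroup M] [Module Rᵐᵒᵖ M]
  {N : Type u} [AddCommGroup N] [Module R N]

lemma add_tmul (m m' : M) (n : N) :
    tmul R M N (m + m') n = tmul R M N m n + tmul R M N m' n :=
  QuotientAddGroup.eq_iff_sub_mem.mpr <| AddSubgroup.subset_closure <|
    .inl <| .inl ⟨m, m', n, (sub_sub _ _ _).symm⟩

lemma tmul_add (m : M) (n n' : N) :
    tmul R M N m (n + n') = tmul R M N m n + tmul R M N m n' :=
  QuotientAddGroup.eq_iff_sub_mem.mpr <| AddSubgroup.subset_closure <|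
    .inl <| .inr ⟨m, n, n', (sub_sub _ _ _).symm⟩

lemma op_smul_tmul (r : R) (m : M) (n : N) :
    tmul R M N (op r • m) n = tmul R M N m (r • n) :=
  QuotientAddGroup.eq_iff_sub_mem.mpr <| AddSubgroup.subset_closure <| .inr ⟨r, m, n, rfl⟩

lemma tmul_zero (m : M) : tmul R M N m 0 = 0 := by
  simpa using tmul_add (R := R) m (0 : N) 0

@[ext]
lemma addHom_ext {G : Type*} [AddCommGroup G] {g g' : NCTensor R M N →+ G}
    (h : ∀ m n, g (tmul R M N m n) = g' (tmul R M N m n)) : g = g' := by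
  suffices g.comp (QuotientAddGroup.mk' _) = g'.comp (QuotientAddGroup.mk' _) from
    QuotientAddGroup.addMonoidHom_ext _ this
  exact FreeAbelianGroup.lift_ext _ _ fun x => h x.1 x.2

instance [Subsingleton N] : Subsingleton (NCTensor R M N) := by
  suffices AddMonoidHom.id (NCTensor R M N) = 0 from
    ⟨fun x y => (DFunLike.congr_fun this x).trans (DFunLike.congr_fun this y).symm⟩
  ext m n
  rw [Subsingleton.elim n 0]
  exact tmul_zero m

noncomputable def contract : NCTensor R M R →+ M := by
  refine QuotientAddGroup.lift _ (FreeAbelianGroup.lift fun p : M × R => op p.2 • p.1) <|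
    (AddSubgroup.closure_le _).mpr ?_
  rintro _ ((⟨m, m', n, rfl⟩ | ⟨m, n, n', rfl⟩) | ⟨r, m, n, rfl⟩) <;>
    simp [smul_add, add_smul, smul_smul, ← op_mul]

@[simp] lemma contract_tmul (m : M) (r : R) : contract (tmul R M R m r) = op r • m :=
  FreeAbelianGroup.lift_apply_of _ _

noncomputable def rid : NCTensor R M R ≃+ M :=
  contract.toAddEquiv (AddMonoidHom.mk' (fun m => tmul R M R m 1) fun m m' => add_tmul m m' 1)
    (by ext m r; simp [op_smul_tmul]) (by ext m; simp)

@[simp] lemma rid_tmul (m : M) (r : R) : rid (tmul R M R m r) = op r • m :=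
  contract_tmul m r

end NCTensor

lemma isFlatLeftModule_self (R : Type u) [Ring R] : IsFlatLeftModule R R := by
  intro A B _ _ _ _ i hi g hg
  have hcomm : (NCTensor.rid.toAddMonoidHom.comp g : NCTensor R A R →+ B) =
      i.toAddMonoidHom.comp NCTensor.rid.toAddMonoidHom := by
    ext a r
    simp [hg]
  have := congrArg DFunLike.coe hcomm
  simp only [AddMonoidHom.coe_comp] at this
  exact .of_comp (this ▸ hi.comp NCTensor.rid.injective)

lemma isFlatLeftModule_of_subsingleton (R : Type u) [Ring R] (N : Type u) [AddCommGroup N]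
    [Module R N] [Subsingleton N] : IsFlatLeftModule R N :=
  fun _ _ _ _ _ _ _ _ _ _ => Function.injective_of_subsingleton _

namespace FlatDimLE1

variable {R : Type u} [Ring R]

lemma of_isFlatLeftModule {N : Type u} [AddCommGroup N] [Module R N]
    (hN : IsFlatLeftModule R N) : FlatDimLE1 R N :=
  ⟨PUnit, _, _, N, _, _, 0, LinearMap.id, isFlatLeftModule_of_subsingleton R PUnit, hN,
    Function.injective_of_subsingleton _, Function.surjective_id, by simp⟩

lemma quotient_range {F₁ F₀ : Type u} [AddCommGroup F₁] [Module R F₁] [AddCommGroup F₀]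
    [Module R F₀] (i : F₁ →ₗ[R] F₀) (hi : Function.Injective i) (h₁ : IsFlatLeftModule R F₁)
    (h₀ : IsFlatLeftModule R F₀) : FlatDimLE1 R (F₀ ⧸ LinearMap.range i) :=
  ⟨F₁, _, _, F₀, _, _, i, (LinearMap.range i).mkQ, h₁, h₀, hi,
    Submodule.mkQ_surjective _, (Submodule.ker_mkQ _).symm⟩

end FlatDimLE1

open CategoryTheory

namespace CategoryTheory

open Limits

variable {C : Type*} [Category C] [Abelian C] [EnoughProjectives C]

lemma ProjectiveResolution.exists_d_comp_eq_of_subsingleton_ext {X : C}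
    (P : ProjectiveResolution X) (Y : C)
    (hext : Subsingleton (((Ext ℤ C 1).obj (Opposite.op X)).obj Y))
    (c : P.complex.X 1 ⟶ Y) (hc : P.complex.d 2 1 ≫ c = 0) :
    ∃ g : P.complex.X 0 ⟶ Y, P.complex.d 1 0 ≫ g = c := by
  have hexact : ((P.complex.linearYonedaObj ℤ Y).sc' 0 1 2).Exact := by
    rw [← (P.complex.linearYonedaObj ℤ Y).exactAt_iff' 0 1 2 (by simp) (by simp),
      HomologicalComplex.exactAt_iff_isZero_homology]
    exact IsZero.of_iso (ModuleCat.isZero_of_subsingleton _) (P.isoExt 1 Y).symm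
  exact (ShortComplex.moduleCat_exact_iff _).mp hexact c hc

lemma ShortComplex.ShortExact.nonempty_splitting_of_subsingleton_ext {S : ShortComplex C}
    (hS : S.ShortExact) (hext : Subsingleton (((Ext ℤ C 1).obj (Opposite.op S.X₃)).obj S.X₁)) :
    Nonempty S.Splitting := by
  have := hS.mono_f
  have := hS.epi_g
  let P := ProjectiveResolution.of S.X₃
  let l : P.complex.X 0 ⟶ S.X₂ := Projective.factorThru (X := S.X₃) (P.π.f 0) S.g
  have hl : l ≫ S.g = P.π.f 0 := Projective.factorThru_comp _ _
  have hdl : (P.complex.d 1 0 ≫ l) ≫ S.g = 0 := by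
    rw [Category.assoc, hl]
    exact P.complex_d_comp_π_f_zero
  let c : P.complex.X 1 ⟶ S.X₁ := hS.exact.lift _ hdl
  have hc : c ≫ S.f = P.complex.d 1 0 ≫ l := hS.exact.lift_f _ _
  have hcocycle : P.complex.d 2 1 ≫ c = 0 := by
    rw [← cancel_mono S.f, Category.assoc, hc, ← Category.assoc, HomologicalComplex.d_comp_d,
      zero_comp, zero_comp]
  obtain ⟨g, hg⟩ := P.exists_d_comp_eq_of_subsingleton_ext S.X₁ hext c hcocycle
  -- correcting `l` by the coboundary makes it vanish on the boundaries, so it descends to `S.X₃`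
  have hdh : P.complex.d 1 0 ≫ (l - g ≫ S.f) = 0 := by
    rw [Preadditive.comp_sub, ← Category.assoc, hg, hc, sub_self]
  let s : S.X₃ ⟶ S.X₂ := P.exact₀.desc _ hdh
  have hsg : s ≫ S.g = 𝟙 S.X₃ := by
    apply (cancel_epi (P.π.f 0)).mp
    refine (P.exact₀.g_desc_assoc _ hdh S.g).trans ?_
    rw [Preadditive.sub_comp, Category.assoc, S.zero, comp_zero, sub_zero, hl]
    exact (Category.comp_id _).symm
  exact ⟨.ofExactOfSection S hS.exact s hsg hS.mono_f⟩

end CategoryTheory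

namespace LinearMap

variable {R : Type u} [Ring R] {A B M : Type u} [AddCommGroup A] [Module R A]
  [AddCommGroup B] [Module R B] [AddCommGroup M] [Module R M] (f : A →ₗ[R] B) (u : A →ₗ[R] M)

/-- The pushout along `u` of the sequence `0 → A → B → B ⧸ f(A) → 0`. -/
noncomputable def pushoutShortComplex : ShortComplex (ModuleCat.{u} R) where
  f := ModuleCat.ofHom ((range (u.prod (-f))).mkQ ∘ₗ inl R M B)
  g := ModuleCat.ofHom <| (range (u.prod (-f))).liftQ ((range f).mkQ ∘ₗ snd R M B) <| by
    rintro _ ⟨a, rfl⟩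
    simp
  zero := by ext; simp

lemma mk_inr_eq_mk_inl (a : A) :
    Submodule.Quotient.mk (p := range (u.prod (-f))) (0, f a) =
      Submodule.Quotient.mk (u a, 0) :=
  (Submodule.Quotient.eq _).mpr ⟨-a, by ext <;> simp⟩

variable {f}

lemma pushoutShortComplex_shortExact (hf : Function.Injective f) :
    (pushoutShortComplex f u).ShortExact := by
  have hmono : Function.Injective ((range (u.prod (-f))).mkQ ∘ₗ inl R M B) := by
    rw [← ker_eq_bot, eq_bot_iff]
    rintro m hm
    obtain ⟨a, ha⟩ := (Submodule.Quotient.mk_eq_zero _).mp hm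
    obtain rfl : a = 0 := hf (neg_eq_zero.mp (congrArg Prod.snd ha) ▸ (map_zero f).symm)
    simpa using (congrArg Prod.fst ha).symm
  have hepi : Function.Surjective (pushoutShortComplex f u).g.hom := by
    intro x
    obtain ⟨b, rfl⟩ := Submodule.mkQ_surjective _ x
    exact ⟨Submodule.Quotient.mk (0, b), rfl⟩
  have : Mono (pushoutShortComplex f u).f := (ModuleCat.mono_iff_injective _).mpr hmono
  have : Epi (pushoutShortComplex f u).g := (ModuleCat.epi_iff_surjective _).mpr hepi
  refine ⟨(ShortComplex.moduleCat_exact_iff _).mpr fun x hx => ?_⟩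
  obtain ⟨⟨m, b⟩, rfl⟩ := Submodule.mkQ_surjective _ x
  obtain ⟨a, rfl⟩ : b ∈ range f := (Submodule.Quotient.mk_eq_zero _).mp hx
  exact ⟨m + u a, (Submodule.Quotient.eq _).mpr ⟨a, by ext <;> simp⟩⟩

lemma exists_comp_eq_of_subsingleton_ext (hf : Function.Injective f)
    (hext : Subsingleton (extGroup R 1 (B ⧸ range f) M)) :
    ∃ v : B →ₗ[R] M, v ∘ₗ f = u := by
  obtain ⟨σ⟩ := (pushoutShortComplex_shortExact u hf).nonempty_splitting_of_subsingleton_ext hext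
  refine ⟨σ.r.hom ∘ₗ (range (u.prod (-f))).mkQ ∘ₗ inr R M B, ext fun a => ?_⟩
  change σ.r.hom (Submodule.Quotient.mk (0, f a)) = u a
  rw [mk_inr_eq_mk_inl]
  exact congrArg (fun φ => φ.hom (u a)) σ.f_r

end LinearMap

theorem weakInjective_hdivisible_matlisCotorsion_general {R Q : Type u} [Ring R] [Ring Q]
    (φ : R →+* Q) (hinj : Function.Injective φ)
    [Module R Q] (hl : ∀ (r : R) (q : Q), r • q = φ r * q)
    (hflat : IsFlatLeftModule R Q)
    (M : Type u) [AddCommGroup M] [Module R M]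
    (hwi : ∀ (I : Type u) [AddCommGroup I] [Module R I],
      FlatDimLE1 R I → Subsingleton (extGroup R 1 I M)) :
    (∀ m : M, ∃ f : Q →ₗ[R] M, f 1 = m) ∧ Subsingleton (extGroup R 1 Q M) := by
  let ι : R →ₗ[R] Q := LinearMap.toSpanSingleton R Q 1
  have hι : ∀ r, ι r = φ r := fun r => (hl r 1).trans (mul_one _)
  have hιinj : Function.Injective ι := fun r s h => hinj (by rwa [hι, hι] at h)
  have hK : FlatDimLE1 R (Q ⧸ LinearMap.range ι) :=
    .quotient_range ι hιinj (isFlatLeftModule_self R) hflat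
  refine ⟨fun m => ?_, hwi Q (.of_isFlatLeftModule hflat)⟩
  obtain ⟨v, hv⟩ := LinearMap.exists_comp_eq_of_subsingleton_ext
    (LinearMap.toSpanSingleton R M m) hιinj (hwi _ hK)
  exact ⟨v, by simpa [ι] using LinearMap.congr_fun hv 1⟩

/-- If `φ : R → Q` is an injective ring epimorphism with `Q` flat as a left `R`-module,
then every weak-injective left `R`-module `M` (i.e. `Ext^1_R(I, M) = 0` for every `I` of
flat dimension `≤ 1`) is h-divisible and Matlis-cotorsion. -/
theorem weakInjective_hdivisible_matlisCotorsion {R Q : Type u} [Ring R] [Ring Q]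
    (φ : R →+* Q) (hinj : Function.Injective φ) (hepi : IsRingEpi φ)
    [Module R Q] (hl : ∀ (r : R) (q : Q), r • q = φ r * q)
    (hflat : IsFlatLeftModule R Q)
    (M : Type u) [AddCommGroup M] [Module R M]
    (hwi : ∀ (I : Type u) [AddCommGroup I] [Module R I],
      FlatDimLE1 R I → Subsingleton (extGroup R 1 I M)) :
    (∀ m : M, ∃ f : Q →ₗ[R] M, f 1 = m) ∧ Subsingleton (extGroup R 1 Q M) :=
  weakInjective_hdivisible_matlisCotorsion_general φ hinj hl hflat M hwi
end
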